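/- Let L be a down-closed set of ipomsets of finite width w = wid(L) such that L contains no identity ipomset. Then for every n ≥ 2w + 1, every element Q of L^n (the n-fold gluing composition of L with itself, down-closed) is separated, i.e., Q \ (S_Q ∪ T_Q) ≠ ∅. -/

import Mathlib

attribute [local instance] Classical.propDecidable

/-- An ipomset (up to isomorphism) represented on a carrier `carrier ⊆ ℕ`:
a strict precedence order `lt`, labels, and interfaces `S`, `T ⊆ carrier`
consisting of minimal resp. maximal elements. -/
structure NIP (Λ : Type) where
  carrier : Finset ℕ
  lt : ℕ → ℕ → Prop
  lab : ℕ → Λ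
  S : Finset ℕ
  T : Finset ℕ
  lt_mem : ∀ x y, lt x y → x ∈ carrier ∧ y ∈ carrier
  lt_irrefl : ∀ x, ¬ lt x x
  lt_trans : ∀ x y z, lt x y → lt y z → lt x z
  S_sub : S ⊆ carrier
  T_sub : T ⊆ carrier
  S_min : ∀ s ∈ S, ∀ x, ¬ lt x s
  T_max : ∀ t ∈ T, ∀ x, ¬ lt t x

/-- Width: maximal cardinality of an antichain for the precedence order. -/
noncomputable def NIP.width {Λ : Type} (P : NIP Λ) : ℕ :=
  (P.carrier.powerset.filter (fun s => ∀ x ∈ s, ∀ y ∈ s, ¬ P.lt x y)).sup Finset.card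

/-- Subsumption `P ⊑ Q`: a bijection of carriers preserving interfaces and
labels and reflecting precedence. -/
def Subsm {Λ : Type} (P Q : NIP Λ) : Prop :=
  ∃ f : ℕ → ℕ, Set.BijOn f ↑P.carrier ↑Q.carrier ∧
    f '' ↑P.S = ↑Q.S ∧ f '' ↑P.T = ↑Q.T ∧
    (∀ x ∈ P.carrier, Q.lab (f x) = P.lab x) ∧
    (∀ x ∈ P.carrier, ∀ y ∈ P.carrier, Q.lt (f x) (f y) → P.lt x y)

/-- `R` is a gluing composition `P * Q`: carriers identified exactly along
`T_P = S_Q` (label-preservingly), precedence generated by those of `P`, `Q`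
plus `x < y` for `x ∈ P \ T_P`, `y ∈ Q \ S_Q`; `S_R = S_P`, `T_R = T_Q`. -/
def IsGluing {Λ : Type} (P Q R : NIP Λ) : Prop :=
  ∃ i j : ℕ → ℕ,
    Set.InjOn i ↑P.carrier ∧ Set.InjOn j ↑Q.carrier ∧
    (∀ a ∈ P.carrier, i a ∈ R.carrier) ∧ (∀ b ∈ Q.carrier, j b ∈ R.carrier) ∧
    (∀ c ∈ R.carrier, (∃ a ∈ P.carrier, i a = c) ∨ (∃ b ∈ Q.carrier, j b = c)) ∧
    (∀ a ∈ P.carrier, ∀ b ∈ Q.carrier, i a = j b → a ∈ P.T ∧ b ∈ Q.S) ∧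
    (∀ a ∈ P.T, ∃ b ∈ Q.S, i a = j b) ∧
    (∀ b ∈ Q.S, ∃ a ∈ P.T, i a = j b) ∧
    (∀ a ∈ P.carrier, ∀ b ∈ Q.carrier, i a = j b → P.lab a = Q.lab b) ∧
    (∀ x y, R.lt x y ↔
      ((∃ a ∈ P.carrier, ∃ a' ∈ P.carrier, x = i a ∧ y = i a' ∧ P.lt a a') ∨
       (∃ b ∈ Q.carrier, ∃ b' ∈ Q.carrier, x = j b ∧ y = j b' ∧ Q.lt b b') ∨
       (∃ a ∈ P.carrier, ∃ b ∈ Q.carrier, x = i a ∧ y = j b ∧ a ∉ P.T ∧ b ∉ Q.S))) ∧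
    ↑R.S = i '' ↑P.S ∧ ↑R.T = j '' ↑Q.T ∧
    (∀ a ∈ P.carrier, R.lab (i a) = P.lab a) ∧ (∀ b ∈ Q.carrier, R.lab (j b) = Q.lab b)

/-- Down-closure of a set of ipomsets under subsumption. -/
def down {Λ : Type} (A : Set (NIP Λ)) : Set (NIP Λ) := {P | ∃ Q ∈ A, Subsm P Q}

/-- Gluing composition of languages:
`L * M = {P * Q : P ∈ L, Q ∈ M, T_P = S_Q}↓`. -/
def comp {Λ : Type} (L M : Set (NIP Λ)) : Set (NIP Λ) :=
  down {R | ∃ P ∈ L, ∃ Q ∈ M, IsGluing P Q R}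

/-- `pw L n` is `L^n`: `L^1 = L`, `L^{n+1} = L * L^n`. -/
def pw {Λ : Type} (L : Set (NIP Λ)) : ℕ → Set (NIP Λ)
  | 0 => ∅
  | 1 => L
  | n+2 => comp L (pw L (n+1))

/-- Identity ipomsets: `S = P = T`. -/
def IsId {Λ : Type} (P : NIP Λ) : Prop := P.S = P.carrier ∧ P.T = P.carrier

/-- Separated ipomsets: some element lies in no interface. -/
def Separated {Λ : Type} (P : NIP Λ) : Prop := ∃ x ∈ P.carrier, x ∉ P.S ∧ x ∉ P.T

/-- Interval ipomsets: those admitting an interval representation. -/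
def IsInterval {Λ : Type} (P : NIP Λ) : Prop :=
  ∃ b e : ℕ → ℝ, (∀ x ∈ P.carrier, b x ≤ e x) ∧
    (∀ x ∈ P.carrier, ∀ y ∈ P.carrier, (P.lt x y ↔ e x < b y))

/-!
The size `|P| - (|S_P| + |T_P|) / 2` is invariant under subsumption and additive under gluing,
and it is at least `1/2` for a non-identity ipomset, so every element of `L^n` has size at least
`n/2`. Width does not grow under subsumption or gluing, so elements of `L^n` have width at most
`w`. A non-separated ipomset is covered by its two interfaces, which are antichains, so its size is
at most its width. Hence `n ≤ 2w`.
-/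

def NIP.size {Λ : Type} (P : NIP Λ) : ℚ := P.carrier.card - (P.S.card + P.T.card) / 2

theorem Finset.card_eq_of_coe_eq_image {α β : Type*} {f : α → β} {X : Finset α} {Y : Finset β}
    (hf : Set.InjOn f X) (h : (Y : Set β) = f '' X) : Y.card = X.card := by
  rw [← Set.ncard_coe_finset, h, hf.ncard_image, Set.ncard_coe_finset]

namespace NIP

variable {Λ : Type}

theorem card_le_width_of_antichain (P : NIP Λ) {A : Finset ℕ} (hA : A ⊆ P.carrier)
    (hanti : ∀ x ∈ A, ∀ y ∈ A, ¬ P.lt x y) : A.card ≤ P.width := by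
  apply Finset.le_sup
  simp only [Finset.mem_filter, Finset.mem_powerset]
  exact ⟨hA, hanti⟩

theorem card_S_le_width (P : NIP Λ) : P.S.card ≤ P.width :=
  P.card_le_width_of_antichain P.S_sub fun x _ y hy => P.S_min y hy x

theorem card_T_le_width (P : NIP Λ) : P.T.card ≤ P.width :=
  P.card_le_width_of_antichain P.T_sub fun x hx y _ => P.T_max x hx y

theorem card_le_width_of_subset_image (P : NIP Λ) {f : ℕ → ℕ} {A : Finset ℕ}
    (hA : ∀ c ∈ A, ∃ a ∈ P.carrier, f a = c)
    (hanti : ∀ a ∈ P.carrier, ∀ a' ∈ P.carrier, f a ∈ A → f a' ∈ A → ¬ P.lt a a') :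
    A.card ≤ P.width := by
  set A' := P.carrier.filter (fun a => f a ∈ A)
  have hcover : A ⊆ A'.image f := by
    intro c hc
    obtain ⟨a, ha, rfl⟩ := hA c hc
    exact Finset.mem_image_of_mem f (Finset.mem_filter.mpr ⟨ha, hc⟩)
  calc A.card ≤ (A'.image f).card := Finset.card_le_card hcover
    _ ≤ A'.card := Finset.card_image_le
    _ ≤ P.width := P.card_le_width_of_antichain (Finset.filter_subset _ _) fun a ha a' ha' =>
        hanti a (Finset.mem_filter.mp ha).1 a' (Finset.mem_filter.mp ha').1
          (Finset.mem_filter.mp ha).2 (Finset.mem_filter.mp ha').2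

theorem half_le_size {P : NIP Λ} (h : ¬ IsId P) : 1 / 2 ≤ P.size := by
  have hS : P.S.card ≤ P.carrier.card := Finset.card_le_card P.S_sub
  have hT : P.T.card ≤ P.carrier.card := Finset.card_le_card P.T_sub
  have hlt : P.S.card < P.carrier.card ∨ P.T.card < P.carrier.card := by
    rcases not_and_or.mp h with h | h
    · exact Or.inl (Finset.card_lt_card (Finset.ssubset_iff_subset_ne.mpr ⟨P.S_sub, h⟩))
    · exact Or.inr (Finset.card_lt_card (Finset.ssubset_iff_subset_ne.mpr ⟨P.T_sub, h⟩))
  have hsum : P.S.card + P.T.card + 1 ≤ 2 * P.carrier.card := by omega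
  have hsum' : (P.S.card + P.T.card + 1 : ℚ) ≤ 2 * P.carrier.card := by exact_mod_cast hsum
  rw [size]
  linarith

theorem size_le_width {P : NIP Λ} (h : ¬ Separated P) : P.size ≤ P.width := by
  have hcover : P.carrier ⊆ P.S ∪ P.T := by
    intro x hx
    by_contra hx'
    rw [Finset.mem_union, not_or] at hx'
    exact h ⟨x, hx, hx'⟩
  have hcard : (P.carrier.card : ℚ) ≤ P.S.card + P.T.card := by
    exact_mod_cast (Finset.card_le_card hcover).trans (Finset.card_union_le _ _)
  have hS : (P.S.card : ℚ) ≤ P.width := by exact_mod_cast P.card_S_le_width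
  have hT : (P.T.card : ℚ) ≤ P.width := by exact_mod_cast P.card_T_le_width
  rw [size]
  linarith

end NIP

namespace Subsm

variable {Λ : Type} {P Q : NIP Λ}

theorem size_eq (h : Subsm P Q) : P.size = Q.size := by
  obtain ⟨f, hbij, hS, hT, -, -⟩ := h
  have hinj := hbij.injOn
  have hcarrier := Finset.card_eq_of_coe_eq_image hinj hbij.image_eq.symm
  have hScard := Finset.card_eq_of_coe_eq_image (hinj.mono (by exact_mod_cast P.S_sub)) hS.symm
  have hTcard := Finset.card_eq_of_coe_eq_image (hinj.mono (by exact_mod_cast P.T_sub)) hT.symm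
  simp only [NIP.size, hcarrier, hScard, hTcard]

theorem width_le (h : Subsm P Q) : P.width ≤ Q.width := by
  obtain ⟨f, hbij, -, -, -, hlt⟩ := h
  refine Finset.sup_le fun s hs => ?_
  simp only [Finset.mem_filter, Finset.mem_powerset] at hs
  obtain ⟨hsub, hanti⟩ := hs
  rw [← Finset.card_image_of_injOn (hbij.injOn.mono (by exact_mod_cast hsub))]
  refine Q.card_le_width_of_antichain ?_ ?_
  · intro y hy
    obtain ⟨x, hx, rfl⟩ := Finset.mem_image.mp hy
    exact_mod_cast hbij.mapsTo (by exact_mod_cast hsub hx)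
  · intro x' hx' y' hy' hQlt
    obtain ⟨x, hx, rfl⟩ := Finset.mem_image.mp hx'
    obtain ⟨y, hy, rfl⟩ := Finset.mem_image.mp hy'
    exact hanti x hx y hy (hlt x (hsub hx) y (hsub hy) hQlt)

end Subsm

namespace IsGluing

variable {Λ : Type} {P Q R : NIP Λ}

theorem card_S (h : IsGluing P Q R) : R.S.card = P.S.card := by
  obtain ⟨i, -, hi, -, -, -, -, -, -, -, -, -, hRS, -⟩ := h
  exact Finset.card_eq_of_coe_eq_image (hi.mono (by exact_mod_cast P.S_sub)) hRS

theorem card_T (h : IsGluing P Q R) : R.T.card = Q.T.card := by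
  obtain ⟨-, j, -, hj, -, -, -, -, -, -, -, -, -, hRT, -⟩ := h
  exact Finset.card_eq_of_coe_eq_image (hj.mono (by exact_mod_cast Q.T_sub)) hRT

/-- Both interfaces are mapped onto the same set of glued events. -/
theorem card_T_eq_card_S (h : IsGluing P Q R) : P.T.card = Q.S.card := by
  obtain ⟨i, j, hi, hj, -, -, -, -, hTS, hST, -⟩ := h
  have himage : P.T.image i = Q.S.image j := by
    ext c
    simp only [Finset.mem_image]
    constructor
    · rintro ⟨a, ha, rfl⟩
      obtain ⟨b, hb, heq⟩ := hTS a ha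
      exact ⟨b, hb, heq.symm⟩
    · rintro ⟨b, hb, rfl⟩
      exact hST b hb
  rw [← Finset.card_image_of_injOn (hi.mono (by exact_mod_cast P.T_sub)), himage,
    Finset.card_image_of_injOn (hj.mono (by exact_mod_cast Q.S_sub))]

/-- `R` is the union of the images of `P` and `Q`, which overlap exactly in the image of `T_P`. -/
theorem card_add_card_T (h : IsGluing P Q R) :
    R.carrier.card + P.T.card = P.carrier.card + Q.carrier.card := by
  obtain ⟨i, j, hi, hj, hiR, hjR, hcov, hident, hTS, -⟩ := h
  have hunion : P.carrier.image i ∪ Q.carrier.image j = R.carrier := by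
    ext c
    simp only [Finset.mem_union, Finset.mem_image]
    constructor
    · rintro (⟨a, ha, rfl⟩ | ⟨b, hb, rfl⟩)
      · exact hiR a ha
      · exact hjR b hb
    · exact hcov c
  have hinter : P.carrier.image i ∩ Q.carrier.image j = P.T.image i := by
    ext c
    simp only [Finset.mem_inter, Finset.mem_image]
    constructor
    · rintro ⟨⟨a, ha, rfl⟩, ⟨b, hb, heq⟩⟩
      exact ⟨a, (hident a ha b hb heq.symm).1, rfl⟩
    · rintro ⟨a, ha, rfl⟩
      obtain ⟨b, hb, heq⟩ := hTS a ha
      exact ⟨⟨a, P.T_sub ha, rfl⟩, ⟨b, Q.S_sub hb, heq.symm⟩⟩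
  have := Finset.card_union_add_card_inter (P.carrier.image i) (Q.carrier.image j)
  rwa [hunion, hinter, Finset.card_image_of_injOn (hi.mono (by exact_mod_cast P.T_sub)),
    Finset.card_image_of_injOn hi, Finset.card_image_of_injOn hj] at this

theorem size_eq (h : IsGluing P Q R) : R.size = P.size + Q.size := by
  have hcard : (R.carrier.card : ℚ) + P.T.card = P.carrier.card + Q.carrier.card := by
    exact_mod_cast h.card_add_card_T
  have hTS : (P.T.card : ℚ) = Q.S.card := by exact_mod_cast h.card_T_eq_card_S
  simp only [NIP.size, h.card_S, h.card_T]
  linarith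

/-- An antichain of `R` lies in the image of `P` or in that of `Q`: an event of `Q \ S_Q`
follows every event of `P \ T_P`, and the image of `T_P` is that of `S_Q`. -/
theorem width_le (h : IsGluing P Q R) : R.width ≤ max P.width Q.width := by
  obtain ⟨i, j, -, -, -, -, hcov, -, hTS, hST, -, hlt, -⟩ := h
  refine Finset.sup_le fun A hA => ?_
  simp only [Finset.mem_filter, Finset.mem_powerset] at hA
  obtain ⟨hsub, hanti⟩ := hA
  by_cases hP : ∀ c ∈ A, ∃ a ∈ P.carrier, i a = c
  · refine le_max_of_le_left (P.card_le_width_of_subset_image hP fun a ha a' ha' hia hia' hPlt =>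
      hanti _ hia _ hia' ((hlt _ _).mpr (Or.inl ⟨a, ha, a', ha', rfl, rfl, hPlt⟩)))
  push Not at hP
  obtain ⟨c₀, hc₀A, hc₀⟩ := hP
  obtain ⟨b₀, hb₀, rfl⟩ : ∃ b ∈ Q.carrier, j b = c₀ :=
    (hcov c₀ (hsub hc₀A)).resolve_left fun ⟨a, ha, heq⟩ => hc₀ a ha heq
  have hb₀S : b₀ ∉ Q.S := fun hb => by
    obtain ⟨a, ha, heq⟩ := hST b₀ hb
    exact hc₀ a (P.T_sub ha) heq
  have hQ : ∀ c ∈ A, ∃ b ∈ Q.carrier, j b = c := by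
    intro c hc
    rcases hcov c (hsub hc) with ⟨a, ha, rfl⟩ | hb
    · by_cases haT : a ∈ P.T
      · obtain ⟨b, hb, heq⟩ := hTS a haT
        exact ⟨b, Q.S_sub hb, heq.symm⟩
      · exact absurd ((hlt _ _).mpr (Or.inr (Or.inr ⟨a, ha, b₀, hb₀, rfl, rfl, haT, hb₀S⟩)))
          (hanti _ hc _ hc₀A)
    · exact hb
  exact le_max_of_le_right (Q.card_le_width_of_subset_image hQ fun b hb b' hb' hjb hjb' hQlt =>
    hanti _ hjb _ hjb' ((hlt _ _).mpr (Or.inr (Or.inl ⟨b, hb, b', hb', rfl, rfl, hQlt⟩))))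

end IsGluing

section pw

variable {Λ : Type} {L : Set (NIP Λ)}

theorem mem_pw_add_two {n : ℕ} {Q : NIP Λ} :
    Q ∈ pw L (n + 2) ↔ ∃ R, (∃ P ∈ L, ∃ Q' ∈ pw L (n + 1), IsGluing P Q' R) ∧ Subsm Q R :=
  Iff.rfl

theorem width_le_of_mem_pw {w : ℕ} (hw : ∀ P ∈ L, P.width ≤ w) :
    ∀ n, ∀ Q ∈ pw L n, Q.width ≤ w
  | 0, _, hQ => hQ.elim
  | 1, Q, hQ => hw Q hQ
  | n + 2, Q, hQ => by
    obtain ⟨R, ⟨P, hP, Q', hQ', hglue⟩, hsub⟩ := mem_pw_add_two.mp hQ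
    calc Q.width ≤ R.width := hsub.width_le
      _ ≤ max P.width Q'.width := hglue.width_le
      _ ≤ w := max_le (hw P hP) (width_le_of_mem_pw hw (n + 1) Q' hQ')

theorem half_le_size_of_mem_pw (hid : ∀ P ∈ L, ¬ IsId P) :
    ∀ n, ∀ Q ∈ pw L n, (n / 2 : ℚ) ≤ Q.size
  | 0, _, hQ => hQ.elim
  | 1, Q, hQ => by simpa using NIP.half_le_size (hid Q hQ)
  | n + 2, Q, hQ => by
    obtain ⟨R, ⟨P, hP, Q', hQ', hglue⟩, hsub⟩ := mem_pw_add_two.mp hQ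
    have hP := NIP.half_le_size (hid P hP)
    have hQ' := half_le_size_of_mem_pw hid (n + 1) Q' hQ'
    rw [hsub.size_eq, hglue.size_eq]
    push_cast at hQ' ⊢
    linarith

end pw

theorem pw_separated_general {Λ : Type} (L : Set (NIP Λ)) (w : ℕ)
    (hw : ∀ P ∈ L, P.width ≤ w)
    (hid : ∀ P ∈ L, ¬ IsId P) :
    ∀ n, 2 * w + 1 ≤ n → ∀ Q ∈ pw L n, Separated Q := by
  intro n hn Q hQ
  by_contra hsep
  have hsize : (n / 2 : ℚ) ≤ Q.size := half_le_size_of_mem_pw hid n Q hQ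
  have hwidth : (Q.width : ℚ) ≤ w := by exact_mod_cast width_le_of_mem_pw hw n Q hQ
  have hn' : (2 * w + 1 : ℚ) ≤ n := by exact_mod_cast hn
  linarith [NIP.size_le_width hsep]

/-- If `L` is a down-closed language of width at most `w` containing no
identity ipomset, then for every `n ≥ 2w + 1` every element of `L^n` is
separated. -/
theorem pw_separated {Λ : Type} (L : Set (NIP Λ)) (w : ℕ)
    (hdc : ∀ P Q : NIP Λ, Subsm P Q → Q ∈ L → P ∈ L)
    (hw : ∀ P ∈ L, P.width ≤ w)
    (hid : ∀ P ∈ L, ¬ IsId P) :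
    ∀ n, 2 * w + 1 ≤ n → ∀ Q ∈ pw L n, Separated Q :=
  pw_separated_general L w hw hid
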